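/- arXiv:2002.03108 — 2 statements merged into one kernel-verified Lean document; each statement's English description precedes it below -/
import Mathlib

section
/- If G is a cactus graph containing at least two cycles, then gp(G) ≥ 4. -/
open SimpleGraph

/-- A set of vertices is in *general position* if no three distinct vertices of it
lie on a common geodesic. -/
def IsGPSet {V : Type*} (G : SimpleGraph V) (S : Set V) : Prop :=
  ∀ x ∈ S, ∀ y ∈ S, ∀ z ∈ S, x ≠ y → y ≠ z → x ≠ z →
    G.dist x z ≠ G.dist x y + G.dist y z

/-- The general position number `gp(G)`: the largest cardinality of a general
position set. -/
noncomputable def gpNumber {V : Type*} (G : SimpleGraph V) : ℕ :=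
  sSup {n | ∃ S : Set V, IsGPSet G S ∧ S.ncard = n}

/-- A gp-set: a general position set of maximum cardinality. -/
def IsGPMaxSet {V : Type*} (G : SimpleGraph V) (S : Set V) : Prop :=
  IsGPSet G S ∧ S.ncard = gpNumber G

/-- The degree of a vertex, as the cardinality of its neighbourhood. -/
noncomputable def vdeg {V : Type*} (G : SimpleGraph V) (v : V) : ℕ :=
  (G.neighborSet v).ncard

/-- A subgraph of `G` which is a cycle: nonempty, finite, connected and 2-regular. -/
def IsCycleSubgraph {V : Type*} (G : SimpleGraph V) (C : G.Subgraph) : Prop :=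
  C.verts.Nonempty ∧ C.verts.Finite ∧ C.coe.Connected ∧
    ∀ v ∈ C.verts, (C.neighborSet v).ncard = 2

/-- A cactus: a connected graph in which any two distinct cycles are edge-disjoint
(equivalently, each block is a cycle or a cut edge). -/
def IsCactus {V : Type*} (G : SimpleGraph V) : Prop :=
  G.Connected ∧ ∀ C₁ C₂ : G.Subgraph, IsCycleSubgraph G C₁ → IsCycleSubgraph G C₂ →
    C₁ ≠ C₂ → Disjoint C₁.edgeSet C₂.edgeSet

/-- The number of cycles of `G`. -/
noncomputable def numCycles {V : Type*} (G : SimpleGraph V) : ℕ :=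
  {C : G.Subgraph | IsCycleSubgraph G C}.ncard

/-- The number of pendant edges of `G` (edges incident with a vertex of degree 1). -/
noncomputable def numPendantEdges {V : Type*} (G : SimpleGraph V) : ℕ :=
  {e ∈ G.edgeSet | ∃ v ∈ e, vdeg G v = 1}.ncard

/-- `v` is a cut vertex of `G`: `G` is connected but deleting `v` disconnects it. -/
def IsCutVtx {V : Type*} (G : SimpleGraph V) (v : V) : Prop :=
  G.Connected ∧ ¬ (G.induce ({v}ᶜ : Set V)).Connected

/-- `p` is a cut-path on the cycle `C`: a path running along `C` that contains
all cut vertices of `G` lying on `C`. -/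
def IsCutPathOn {V : Type*} (G : SimpleGraph V) (C : G.Subgraph)
    {u v : V} (p : G.Walk u v) : Prop :=
  p.IsPath ∧ (∀ e ∈ p.edges, e ∈ C.edgeSet) ∧
    ∀ w ∈ C.verts, IsCutVtx G w → w ∈ p.support

/-- `D_c` of a cycle `C`: the minimum number of edges of a cut-path between two
distinct cut vertices of `C`. -/
noncomputable def Dc {V : Type*} (G : SimpleGraph V) (C : G.Subgraph) : ℕ :=
  sInf {n | ∃ (u v : V) (p : G.Walk u v), u ≠ v ∧ u ∈ C.verts ∧ v ∈ C.verts ∧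
    IsCutVtx G u ∧ IsCutVtx G v ∧ IsCutPathOn G C p ∧ p.length = n}

/-- A good cycle: an end-block (at most one cut vertex), or a cycle whose `D_c`
is at most `ℓ/2` for even length `ℓ`, resp. at most `⌊ℓ/2⌋ - 1` for odd `ℓ`. -/
def IsGoodCycle {V : Type*} (G : SimpleGraph V) (C : G.Subgraph) : Prop :=
  IsCycleSubgraph G C ∧
    ({v ∈ C.verts | IsCutVtx G v}.ncard ≤ 1 ∨
     (Even C.verts.ncard ∧ Dc G C ≤ C.verts.ncard / 2) ∨
     (Odd C.verts.ncard ∧ Dc G C ≤ C.verts.ncard / 2 - 1))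

/-- A block of a cactus: a cycle or a bridge (cut edge). -/
def IsCactusBlock {V : Type*} (G : SimpleGraph V) (H : G.Subgraph) : Prop :=
  IsCycleSubgraph G H ∨
    ∃ (u v : V) (h : G.Adj u v), G.IsBridge s(u, v) ∧ H = G.subgraphOfAdj h

/-- A chain cactus: a cactus in which every block has at most two cut vertices
and every cut vertex lies in exactly two blocks. -/
def IsChainCactus {V : Type*} (G : SimpleGraph V) : Prop :=
  IsCactus G ∧
    (∀ H : G.Subgraph, IsCactusBlock G H → {v ∈ H.verts | IsCutVtx G v}.ncard ≤ 2) ∧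
    (∀ v : V, IsCutVtx G v →
      {H : G.Subgraph | IsCactusBlock G H ∧ v ∈ H.verts}.ncard = 2)

/-- An end-block: a cycle containing exactly one cut vertex of `G`. -/
def IsEndBlock {V : Type*} (G : SimpleGraph V) (C : G.Subgraph) : Prop :=
  IsCycleSubgraph G C ∧ {v ∈ C.verts | IsCutVtx G v}.ncard = 1

/-- The set of vertices lying on some cycle of `G`. -/
def cycleVerts {V : Type*} (G : SimpleGraph V) : Set V :=
  {v | ∃ C : G.Subgraph, IsCycleSubgraph G C ∧ v ∈ C.verts}

/-- The vertices of pendant trees of a cactus, roots removed: vertices lying on no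
cycle and on no path between two cycle vertices (other than as an endpoint). -/
def pendantTreeInterior {V : Type*} (G : SimpleGraph V) : Set V :=
  {v | v ∉ cycleVerts G ∧
    ¬ ∃ (x y : V) (p : G.Walk x y), p.IsPath ∧ x ∈ cycleVerts G ∧
      y ∈ cycleVerts G ∧ v ∈ p.support ∧ v ≠ x ∧ v ≠ y}
/-!
Pick two distinct cycles `C₁, C₂` and a closest pair `u₁ ∈ C₁`, `u₂ ∈ C₂`. In a cactus a walk
between two distinct vertices of a cycle `C` must use an edge of `C`: otherwise it would close up,
with an arc of `C`, a second cycle sharing an edge with `C`. Consequently every vertex of `C₁`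
other than `u₁` is at distance at least `d(u₁, u₂) + 2` from every vertex of `C₂` other than `u₂`.
The two neighbours of `u₁` on `C₁` and the two neighbours of `u₂` on `C₂` then form two pairs at
distance at most `2` within a pair and exactly `d(u₁, u₂) + 2` across, so no three of them lie on
a common geodesic.
-/

section GeneralPosition

variable {V : Type*} {G : SimpleGraph V}

theorem le_gpNumber [Finite V] {S : Set V} (hS : IsGPSet G S) : S.ncard ≤ gpNumber G :=
  le_csSup ⟨Nat.card V, by rintro _ ⟨T, -, rfl⟩; exact T.ncard_le_card⟩ ⟨S, hS, rfl⟩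

theorem four_le_gpNumber_of_dist [Finite V] {a b c d : V} {D : ℕ} (hab : 0 < G.dist a b)
    (hcd : 0 < G.dist c d) (hab' : G.dist a b < 2 * D) (hcd' : G.dist c d < 2 * D)
    (hac : G.dist a c = D) (had : G.dist a d = D) (hbc : G.dist b c = D)
    (hbd : G.dist b d = D) : 4 ≤ gpNumber G := by
  have hba := G.dist_comm (u := b) (v := a)
  have hdc := G.dist_comm (u := d) (v := c)
  have hca := G.dist_comm (u := c) (v := a)
  have hda := G.dist_comm (u := d) (v := a)
  have hcb := G.dist_comm (u := c) (v := b)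
  have hdb := G.dist_comm (u := d) (v := b)
  have hGP : IsGPSet G {a, b, c, d} := by
    intro x hx y hy z hz hxy hyz hxz
    simp only [Set.mem_insert_iff, Set.mem_singleton_iff] at hx hy hz
    rcases hx with rfl | rfl | rfl | rfl <;> rcases hy with rfl | rfl | rfl | rfl <;>
      rcases hz with rfl | rfl | rfl | rfl <;> first | contradiction | omega
  have hne : ∀ {x y : V}, 0 < G.dist x y → x ≠ y := fun h hxy => by
    rw [hxy, dist_self] at h
    exact h.false
  have hD : 0 < D := by omega
  have hcard : ({a, b, c, d} : Set V).ncard = 4 := by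
    rw [Set.ncard_insert_of_notMem, Set.ncard_insert_of_notMem, Set.ncard_pair]
    · exact hne hcd
    · simp [hne (hbc ▸ hD), hne (hbd ▸ hD)]
    · simp [hne hab, hne (hac ▸ hD), hne (had ▸ hD)]
  exact hcard ▸ le_gpNumber hGP

end GeneralPosition

namespace SimpleGraph

variable {V : Type*} {G : SimpleGraph V}

theorem Walk.IsCycle.isCycleSubgraph {u : V} {c : G.Walk u u} (hc : c.IsCycle) :
    IsCycleSubgraph G c.toSubgraph := by
  refine ⟨⟨u, c.start_mem_verts_toSubgraph⟩, ?_, c.toSubgraph_connected.coe, fun v hv => ?_⟩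
  · rw [Walk.verts_toSubgraph]
    exact c.support.finite_toSet
  · exact hc.ncard_neighborSet_toSubgraph_eq_two (c.mem_verts_toSubgraph.mp hv)

theorem Walk.IsCycle.not_nil_of_isPath_left {u v : V} {p : G.Walk u v} {q : G.Walk v u}
    (hc : (p.append q).IsCycle) (hp : p.IsPath) : ¬ q.Nil := by
  intro hq
  obtain rfl := hq.eq
  rw [hq.eq_nil, Walk.append_nil] at hc
  exact hc.not_nil (Walk.isPath_iff_nil.mp hp)

theorem Walk.IsCycle.not_nil_of_isPath_right {u v : V} {p : G.Walk u v} {q : G.Walk v u}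
    (hc : (p.append q).IsCycle) (hq : q.IsPath) : ¬ p.Nil := by
  have hc' := hc.reverse
  rw [Walk.reverse_append] at hc'
  simpa using hc'.not_nil_of_isPath_left hq.reverse

theorem Connected.dist_le_two_of_adj_of_adj (hG : G.Connected) {u a b : V} (ha : G.Adj u a)
    (hb : G.Adj u b) : G.dist a b ≤ 2 :=
  calc G.dist a b ≤ G.dist a u + G.dist u b := hG.dist_triangle
    _ = 2 := by rw [dist_comm, dist_eq_one_iff_adj.mpr ha, dist_eq_one_iff_adj.mpr hb]

theorem Walk.eq_of_mem_support_of_length_le_dist {u v x : V} (p : G.Walk u v)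
    (hx : x ∈ p.support) (h : p.length ≤ G.dist u x) : x = v := by
  obtain ⟨p₁, p₂, rfl⟩ := Walk.mem_support_iff_exists_append.mp hx
  have := G.dist_le p₁
  rw [Walk.length_append] at h
  exact Walk.eq_of_length_eq_zero (p := p₂) (by omega)

theorem Walk.notMem_edgeSet_of_length_le_dist {u v : V} {H : G.Subgraph} (p : G.Walk u v)
    (hp : ∀ y ∈ H.verts, p.length ≤ G.dist u y) {e : Sym2 V} (he : e ∈ p.edges) :
    e ∉ H.edgeSet := by
  induction e using Sym2.ind with
  | h x z =>
    intro hH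
    have hx := p.eq_of_mem_support_of_length_le_dist (p.fst_mem_support_of_mem_edges he)
      (hp x hH.fst_mem)
    have hz := p.eq_of_mem_support_of_length_le_dist (p.snd_mem_support_of_mem_edges he)
      (hp z hH.snd_mem)
    exact hH.adj_sub.ne (hx.trans hz.symm)

theorem Subgraph.Preconnected.exists_walk_edges_mem {C : G.Subgraph} (hC : C.Preconnected)
    {a b : V} (ha : a ∈ C.verts) (hb : b ∈ C.verts) :
    ∃ r : G.Walk a b, ∀ e ∈ r.edges, e ∈ C.edgeSet := by
  obtain ⟨r, hr⟩ := (Subgraph.preconnected_iff_forall_exists_walk_subgraph C).mp hC ha hb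
  exact ⟨r, fun e he => Subgraph.edgeSet_mono hr (r.mem_edges_toSubgraph.mpr he)⟩

end SimpleGraph

section Cactus

variable {V : Type*} {G : SimpleGraph V}

theorem IsCycleSubgraph.connected {C : G.Subgraph} (hC : IsCycleSubgraph G C) : C.Connected :=
  Subgraph.connected_iff'.mpr hC.2.2.1

theorem IsCactus.exists_mem_edges_mem_edgeSet (hG : IsCactus G) {C : G.Subgraph}
    (hC : IsCycleSubgraph G C) {s t : V} (hs : s ∈ C.verts) (ht : t ∈ C.verts) (hst : s ≠ t)
    (W : G.Walk s t) : ∃ e ∈ W.edges, e ∈ C.edgeSet := by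
  classical
  by_contra! hW
  obtain ⟨r, hr⟩ := hC.connected.preconnected.exists_walk_edges_mem hs ht
  set p := r.toPath
  set q := W.toPath
  have hpC : ∀ e ∈ p.1.edges, e ∈ C.edgeSet := fun e he => hr e (r.edges_toPath_subset_edges he)
  have hqC : ∀ e ∈ q.1.edges, e ∉ C.edgeSet := fun e he => hW e (W.edges_toPath_subset_edges he)
  have hpq : p.1 ≠ q.1 := by
    intro h
    obtain ⟨e, he⟩ :=
      List.exists_mem_of_ne_nil _ (p.1.edges_eq_nil.not.mpr (Walk.not_nil_of_ne hst))
    exact hqC e (h ▸ he) (hpC e he)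
  obtain ⟨_, _, p', q', hp', hq', hc⟩ := p.2.exists_isCycle_of_ne q.2 hpq
  set c := p'.append q'.reverse
  have hc_edges : ∀ {e}, e ∈ p'.edges ∨ e ∈ q'.edges → e ∈ c.toSubgraph.edgeSet := by
    intro e he
    rw [Walk.mem_edges_toSubgraph, Walk.edges_append, Walk.edges_reverse, List.mem_append,
      List.mem_reverse]
    exact he
  -- `c` equals `C` or is edge-disjoint from it; either way one of its two arcs is empty.
  by_cases hcC : c.toSubgraph = C
  · refine hc.not_nil_of_isPath_left (Walk.isPath_of_isSubwalk hp' p.2) (Walk.nil_reverse.mpr ?_)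
    refine Walk.edges_eq_nil.mp (List.eq_nil_iff_forall_not_mem.mpr fun e he => ?_)
    exact hqC e (hq'.edges_subset he) (hcC ▸ hc_edges (Or.inr he))
  · refine hc.not_nil_of_isPath_right (Walk.isPath_of_isSubwalk hq' q.2).reverse ?_
    refine Walk.edges_eq_nil.mp (List.eq_nil_iff_forall_not_mem.mpr fun e he => ?_)
    exact Set.disjoint_left.mp (hG.2 _ _ hc.isCycleSubgraph hC hcC) (hc_edges (Or.inl he))
      (hpC e (hp'.edges_subset he))

theorem IsCactus.eq_of_forall_dist_le (hG : IsCactus G) {C : G.Subgraph}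
    (hC : IsCycleSubgraph G C) {a s t : V} (hs : s ∈ C.verts) (ht : t ∈ C.verts)
    (hmin : ∀ y ∈ C.verts, G.dist a s ≤ G.dist a y) (Q : G.Walk a t)
    (hQ : ∀ e ∈ Q.edges, e ∉ C.edgeSet) : s = t := by
  by_contra hst
  obtain ⟨R, hR⟩ := hG.1.exists_walk_length_eq_dist a s
  obtain ⟨e, he, heC⟩ := hG.exists_mem_edges_mem_edgeSet hC hs ht hst (R.reverse.append Q)
  rw [Walk.edges_append, Walk.edges_reverse, List.mem_append, List.mem_reverse] at he
  rcases he with he | he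
  · exact R.notMem_edgeSet_of_length_le_dist (fun y hy => hR ▸ hmin y hy) he heC
  · exact hQ e he heC

section TwoCycles

variable (hG : IsCactus G) {C₁ C₂ : G.Subgraph} (hC₁ : IsCycleSubgraph G C₁)
  (hC₂ : IsCycleSubgraph G C₂) (hne : C₁ ≠ C₂) {u₁ u₂ : V} (hu₁ : u₁ ∈ C₁.verts)
  (hu₂ : u₂ ∈ C₂.verts) (hmin : ∀ a ∈ C₁.verts, ∀ b ∈ C₂.verts, G.dist u₁ u₂ ≤ G.dist a b)
include hG hC₁ hC₂ hne hu₁ hu₂ hmin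

theorem IsCactus.dist_lt_dist_of_closest {v w : V} (hv : v ∈ C₁.verts) (hw : w ∈ C₂.verts)
    (hwu : w ≠ u₂) : G.dist u₁ u₂ < G.dist v w := by
  by_contra! h
  obtain ⟨r, hr⟩ := hC₁.connected.preconnected.exists_walk_edges_mem hv hu₁
  obtain ⟨P, hP⟩ := hG.1.exists_walk_length_eq_dist u₁ u₂
  refine hwu (hG.eq_of_forall_dist_le hC₂ hw hu₂
    (fun y hy => h.trans (hmin v hv y hy)) (r.append P) fun e he => ?_)
  rw [Walk.edges_append, List.mem_append] at he
  rcases he with he | he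
  · exact Set.disjoint_left.mp (hG.2 _ _ hC₁ hC₂ hne) (hr e he)
  · exact P.notMem_edgeSet_of_length_le_dist (fun y hy => hP ▸ hmin u₁ hu₁ y hy) he

theorem IsCactus.add_two_le_dist_of_closest {x w : V} (hx : x ∈ C₁.verts) (hxu : x ≠ u₁)
    (hw : w ∈ C₂.verts) (hwu : w ≠ u₂) : G.dist u₁ u₂ + 2 ≤ G.dist x w := by
  by_contra! h
  obtain ⟨r, hr⟩ := hC₂.connected.preconnected.exists_walk_edges_mem hw hu₂
  obtain ⟨P, hP⟩ := hG.1.exists_walk_length_eq_dist u₁ u₂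
  have hfar : ∀ y ∈ C₁.verts, G.dist w x ≤ G.dist w y := fun y hy => by
    have := hG.dist_lt_dist_of_closest hC₁ hC₂ hne hu₁ hu₂ hmin hy hw hwu
    rw [dist_comm, dist_comm (u := w)]
    omega
  refine hxu (hG.eq_of_forall_dist_le hC₁ hx hu₁ hfar (r.append P.reverse) fun e he => ?_)
  rw [Walk.edges_append, List.mem_append] at he
  rcases he with he | he
  · exact Set.disjoint_right.mp (hG.2 _ _ hC₁ hC₂ hne) (hr e he)
  · refine P.reverse.notMem_edgeSet_of_length_le_dist (fun y hy => ?_) he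
    rw [Walk.length_reverse, hP, dist_comm (u := u₂)]
    exact hmin y hy u₂ hu₂

theorem IsCactus.dist_eq_of_adj_closest {x w : V} (hx : C₁.Adj u₁ x) (hw : C₂.Adj u₂ w) :
    G.dist x w = G.dist u₁ u₂ + 2 := by
  refine le_antisymm ?_ (hG.add_two_le_dist_of_closest hC₁ hC₂ hne hu₁ hu₂ hmin hx.snd_mem
    hx.adj_sub.ne.symm hw.snd_mem hw.adj_sub.ne.symm)
  calc G.dist x w ≤ G.dist x u₁ + G.dist u₁ w := hG.1.dist_triangle
    _ ≤ G.dist x u₁ + (G.dist u₁ u₂ + G.dist u₂ w) := by gcongr; exact hG.1.dist_triangle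
    _ = G.dist u₁ u₂ + 2 := by
      rw [dist_comm, dist_eq_one_iff_adj.mpr hx.adj_sub, dist_eq_one_iff_adj.mpr hw.adj_sub]
      ring

end TwoCycles

end Cactus

/-- A cactus with at least two cycles has gp-number at least 4. -/
theorem gp_ge_four_of_two_cycles {V : Type*} [Fintype V] (G : SimpleGraph V)
    (hG : IsCactus G) (h2 : 2 ≤ numCycles G) :
    4 ≤ gpNumber G := by
  obtain ⟨C₁, hC₁, C₂, hC₂, hne⟩ := (Set.one_lt_ncard_iff_nontrivial_and_finite.mp h2).1
  obtain ⟨⟨u₁, u₂⟩, ⟨hu₁, hu₂⟩, hmin⟩ := (C₁.verts ×ˢ C₂.verts).exists_min_image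
    (fun p => G.dist p.1 p.2) (hC₁.2.1.prod hC₂.2.1) (hC₁.1.prod hC₂.1)
  have hdist : ∀ {x w}, C₁.Adj u₁ x → C₂.Adj u₂ w → G.dist x w = G.dist u₁ u₂ + 2 :=
    hG.dist_eq_of_adj_closest hC₁ hC₂ hne hu₁ hu₂ fun x hx y hy => hmin (x, y) ⟨hx, hy⟩
  obtain ⟨a, b, hab, hN₁⟩ := Set.ncard_eq_two.mp (hC₁.2.2.2 u₁ hu₁)
  obtain ⟨c, d, hcd, hN₂⟩ := Set.ncard_eq_two.mp (hC₂.2.2.2 u₂ hu₂)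
  have ha : C₁.Adj u₁ a := by simp [← Subgraph.mem_neighborSet, hN₁]
  have hb : C₁.Adj u₁ b := by simp [← Subgraph.mem_neighborSet, hN₁]
  have hc : C₂.Adj u₂ c := by simp [← Subgraph.mem_neighborSet, hN₂]
  have hd : C₂.Adj u₂ d := by simp [← Subgraph.mem_neighborSet, hN₂]
  refine four_le_gpNumber_of_dist (D := G.dist u₁ u₂ + 2) (hG.1.pos_dist_of_ne hab)
    (hG.1.pos_dist_of_ne hcd) ?_ ?_ (hdist ha hc) (hdist ha hd) (hdist hb hc) (hdist hb hd)
  · have := hG.1.dist_le_two_of_adj_of_adj ha.adj_sub hb.adj_sub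
    omega
  · have := hG.1.dist_le_two_of_adj_of_adj hc.adj_sub hd.adj_sub
    omega
end

section
/- For n ≥ 6, if S is a gp-set of the wheel graph W_n, then S is contained in the vertex set of the outer cycle C_n, and the subgraph of C_n induced by S contains no path on three vertices (i.e., it is a disjoint union of copies of K₁ and K₂). -/
/-!
`W_n` has diameter at most two, so three distinct vertices lie on a common geodesic exactly
when they induce a path `x ~ y ~ z` with `x ≁ z`; for `n ≥ 4` the rim has no triangles.
Hence a general position set containing the centre meets the rim in a clique, i.e. in at most
two vertices, whereas `{0, 1, 3, 4}` is a general position set of size four once `n ≥ 6`.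
-/

open SimpleGraph

/-- The wheel graph `W_n`: the cycle on `ZMod n` together with a centre `none`
adjacent to every cycle vertex. -/
def wheelGraph (n : ℕ) : SimpleGraph (Option (ZMod n)) :=
  SimpleGraph.fromRel (fun a b =>
    a = none ∨ ∃ i : ZMod n, a = some i ∧ b = some (i + 1))

theorem isGPSet_iff_of_dist_le_two {V : Type*} {G : SimpleGraph V} (hG : G.Connected)
    (hdist : ∀ x y, G.dist x y ≤ 2) {S : Set V} :
    IsGPSet G S ↔
      ∀ x ∈ S, ∀ y ∈ S, ∀ z ∈ S, x ≠ z → G.Adj x y → G.Adj y z → G.Adj x z := by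
  constructor
  · intro hS x hx y hy z hz hxz hxy hyz
    by_contra hnxz
    have hxz2 : G.dist x z = 2 := by
      have := hG.pos_dist_of_ne hxz
      have : G.dist x z ≠ 1 := mt dist_eq_one_iff_adj.mp hnxz
      have := hdist x z
      omega
    exact hS x hx y hy z hz hxy.ne hyz.ne hxz
      (by rw [hxz2, dist_eq_one_iff_adj.mpr hxy, dist_eq_one_iff_adj.mpr hyz])
  · intro hS x hx y hy z hz hxy hyz hxz heq
    have := hG.pos_dist_of_ne hxy
    have := hG.pos_dist_of_ne hyz
    have := hdist x z
    have hxy1 : G.dist x y = 1 := by omega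
    have hyz1 : G.dist y z = 1 := by omega
    have hxz1 := dist_eq_one_iff_adj.mpr <|
      hS x hx y hy z hz hxz (dist_eq_one_iff_adj.mp hxy1) (dist_eq_one_iff_adj.mp hyz1)
    omega

theorem ncard_le_gpNumber {V : Type*} [Finite V] {G : SimpleGraph V} {S : Set V}
    (hS : IsGPSet G S) : S.ncard ≤ gpNumber G := by
  refine le_csSup ⟨Nat.card V, ?_⟩ ⟨S, hS, rfl⟩
  rintro m ⟨U, -, rfl⟩
  exact Set.ncard_le_card U

theorem ZMod.natCast_injOn_Iio (n : ℕ) : Set.InjOn (Nat.cast : ℕ → ZMod n) (Set.Iio n) :=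
  fun k hk l hl h => by
    simpa [ZMod.val_natCast_of_lt hk, ZMod.val_natCast_of_lt hl] using congrArg ZMod.val h

section Wheel

variable {n : ℕ}

theorem wheelGraph_adj_some_some {a b : ZMod n} :
    (wheelGraph n).Adj (some a) (some b) ↔ a ≠ b ∧ (b = a + 1 ∨ a = b + 1) := by
  simp only [wheelGraph, fromRel_adj, ne_eq, Option.some.injEq, reduceCtorEq, false_or]
  constructor
  · rintro ⟨h, ⟨i, rfl, hb⟩ | ⟨i, rfl, hb⟩⟩
    exacts [⟨h, Or.inl hb⟩, ⟨h, Or.inr hb⟩]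
  · rintro ⟨h, hb | hb⟩
    exacts [⟨h, Or.inl ⟨a, rfl, hb⟩⟩, ⟨h, Or.inr ⟨b, rfl, hb⟩⟩]

theorem wheelGraph_adj_none_some {a : ZMod n} : (wheelGraph n).Adj none (some a) := by
  simp [wheelGraph]

theorem wheelGraph_connected : (wheelGraph n).Connected := by
  have hnone : ∀ x, (wheelGraph n).Reachable none x
    | none => Reachable.refl _
    | some _ => wheelGraph_adj_none_some.reachable
  exact Connected.mk fun x y => (hnone x).symm.trans (hnone y)

theorem wheelGraph_dist_le_two (x y : Option (ZMod n)) : (wheelGraph n).dist x y ≤ 2 := by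
  have hnone : ∀ z, (wheelGraph n).dist none z ≤ 1
    | none => by simp
    | some _ => (dist_eq_one_iff_adj.mpr wheelGraph_adj_none_some).le
  calc (wheelGraph n).dist x y ≤ (wheelGraph n).dist x none + (wheelGraph n).dist none y :=
        wheelGraph_connected.dist_triangle
    _ ≤ 1 + 1 := add_le_add (dist_comm.trans_le (hnone x)) (hnone y)

theorem isGPSet_wheelGraph_iff {S : Set (Option (ZMod n))} :
    IsGPSet (wheelGraph n) S ↔ ∀ x ∈ S, ∀ y ∈ S, ∀ z ∈ S, x ≠ z →
      (wheelGraph n).Adj x y → (wheelGraph n).Adj y z → (wheelGraph n).Adj x z :=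
  isGPSet_iff_of_dist_le_two wheelGraph_connected wheelGraph_dist_le_two

/-- The rim differences `b - a`, `c - b`, `a - c` are each `±1` and sum to `0`, which forces
`1 = 0` or `3 = 0` in `ZMod n`. -/
theorem wheelGraph_not_adj_of_adj_of_adj (hn : 4 ≤ n) {a b c : ZMod n}
    (hab : (wheelGraph n).Adj (some a) (some b)) (hbc : (wheelGraph n).Adj (some b) (some c)) :
    ¬ (wheelGraph n).Adj (some a) (some c) := by
  intro hac
  rw [wheelGraph_adj_some_some] at hab hbc hac
  obtain ⟨-, h1⟩ := hab
  obtain ⟨-, h2⟩ := hbc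
  obtain ⟨hac, h3⟩ := hac
  have natCast_ne_zero : ∀ k : ℕ, 0 < k → k < 4 → (k : ZMod n) ≠ 0 := fun k hk0 hk4 h =>
    absurd (Nat.le_of_dvd hk0 ((ZMod.natCast_eq_zero_iff k n).mp h)) (by omega)
  have one_ne : (1 : ZMod n) ≠ 0 := by exact_mod_cast natCast_ne_zero 1 (by omega) (by omega)
  have three_ne : (3 : ZMod n) ≠ 0 := by exact_mod_cast natCast_ne_zero 3 (by omega) (by omega)
  rcases h1 with h1 | h1 <;> rcases h2 with h2 | h2 <;> rcases h3 with h3 | h3 <;>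
    first
      | exact hac (by linear_combination h2 - h1)
      | exact hac (by linear_combination h1 - h2)
      | exact one_ne (by linear_combination h3 - h1 - h2)
      | exact one_ne (by linear_combination h1 + h2 - h3)
      | exact three_ne (by linear_combination -h1 - h2 - h3)

theorem eq_succ_or_succ_eq_of_wheelGraph_adj_natCast {i j : ℕ} (hi : i + 1 < n) (hj : j + 1 < n)
    (h : (wheelGraph n).Adj (some (i : ZMod n)) (some (j : ZMod n))) : i + 1 = j ∨ j + 1 = i := by
  obtain ⟨-, h | h⟩ := wheelGraph_adj_some_some.mp h
  · refine Or.inl <| ZMod.natCast_injOn_Iio n (x₁ := i + 1) (x₂ := j) hi (by simp; omega) ?_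
    push_cast
    exact h.symm
  · refine Or.inr <| ZMod.natCast_injOn_Iio n (x₁ := j + 1) (x₂ := i) hj (by simp; omega) ?_
    push_cast
    exact h.symm

theorem four_le_gpNumber_wheelGraph (hn : 6 ≤ n) : 4 ≤ gpNumber (wheelGraph n) := by
  have : NeZero n := ⟨by omega⟩
  let rim : ℕ → Option (ZMod n) := some ∘ Nat.cast
  let T : Finset ℕ := {0, 1, 3, 4}
  have hT : ∀ i ∈ T, i + 1 < n := by
    intro i hi
    simp only [T, Finset.mem_insert, Finset.mem_singleton] at hi
    omega
  have hgp : IsGPSet (wheelGraph n) (T.image rim : Set _) := by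
    rw [isGPSet_wheelGraph_iff]
    simp only [Finset.coe_image, Set.forall_mem_image, Finset.mem_coe]
    intro i hi j hj k hk hik hij hjk
    have := eq_succ_or_succ_eq_of_wheelGraph_adj_natCast (hT i hi) (hT j hj) hij
    have := eq_succ_or_succ_eq_of_wheelGraph_adj_natCast (hT j hj) (hT k hk) hjk
    simp only [T, Finset.mem_insert, Finset.mem_singleton] at hi hj hk
    exact (hik (congrArg rim (by omega))).elim
  have hinj : Set.InjOn rim T := (Option.some_injective _).comp_injOn <|
    (ZMod.natCast_injOn_Iio n).mono fun i hi => Set.mem_Iio.mpr (by linarith [hT i hi])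
  calc 4 = (T.image rim : Set _).ncard := by
        rw [Set.ncard_coe_finset, Finset.card_image_of_injOn hinj]; rfl
    _ ≤ gpNumber (wheelGraph n) := ncard_le_gpNumber hgp

theorem ncard_le_three_of_none_mem (hn : 4 ≤ n) {S : Set (Option (ZMod n))}
    (hS : IsGPSet (wheelGraph n) S) (hnone : none ∈ S) : S.ncard ≤ 3 := by
  have : NeZero n := ⟨by omega⟩
  have hclique : ∀ a b : ZMod n, some a ∈ S → some b ∈ S → a ≠ b →
      (wheelGraph n).Adj (some a) (some b) := fun a b ha hb hab =>
    isGPSet_wheelGraph_iff.mp hS _ ha none hnone _ hb (by simpa using hab)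
      wheelGraph_adj_none_some.symm wheelGraph_adj_none_some
  by_contra! h3
  have := Set.ncard_sdiff_singleton_add_one hnone
  obtain ⟨x, y, z, hx, hy, hz, hxy, hxz, hyz⟩ :=
    (Set.two_lt_ncard_iff (s := S \ {none})).mp (by omega)
  obtain ⟨a, rfl⟩ := Option.ne_none_iff_exists'.mp hx.2
  obtain ⟨b, rfl⟩ := Option.ne_none_iff_exists'.mp hy.2
  obtain ⟨c, rfl⟩ := Option.ne_none_iff_exists'.mp hz.2
  simp only [ne_eq, Option.some.injEq] at hxy hxz hyz
  exact wheelGraph_not_adj_of_adj_of_adj hn (hclique a b hx.1 hy.1 hxy)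
    (hclique b c hy.1 hz.1 hyz) (hclique a c hx.1 hz.1 hxz)

end Wheel

/-- For `n ≥ 6` every gp-set `S` of the wheel `W_n` lies on the
outer cycle, and the subgraph of the outer cycle induced by `S` contains no path
on three vertices. -/
theorem gpSet_wheel_structure (n : ℕ) (hn : 6 ≤ n)
    (S : Set (Option (ZMod n))) (hS : IsGPMaxSet (wheelGraph n) S) :
    none ∉ S ∧
    ∀ a b c : ZMod n, some a ∈ S → some b ∈ S → some c ∈ S → a ≠ c →
      (wheelGraph n).Adj (some a) (some b) →
      (wheelGraph n).Adj (some b) (some c) → False := by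
  obtain ⟨hgp, hcard⟩ := hS
  refine ⟨fun hnone => ?_, fun a b c ha hb hc hac hab hbc => ?_⟩
  · have := ncard_le_three_of_none_mem (by omega) hgp hnone
    have := four_le_gpNumber_wheelGraph hn
    omega
  · exact wheelGraph_not_adj_of_adj_of_adj (by omega) hab hbc <|
      isGPSet_wheelGraph_iff.mp hgp _ ha _ hb _ hc (by simpa using hac) hab hbc
end
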